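/- Let A be a differential graded algebra over F_2 with differential δ and multiplication μ, let M be a right differential graded module over A with differential m_1, and let (χ, δ¹) be a type D structure over A. Then the F_2-linear map d : M ⊗ χ → M ⊗ χ defined by d(x ⊗ y) = m_1(x) ⊗ y + (ρ ⊗ id_χ)(x ⊗ δ¹(y)), where ρ : M ⊗ A → M is the right action, satisfies d ∘ d = 0; that is, the box tensor product M ⊠ χ is a chain complex. -/

import Mathlib

open TensorProduct LinearMap

/-!
Write `B = actTensor χ ρ : M ⊗ (A ⊗ χ) → M ⊗ χ` for `(ρ ⊗ id_χ) ∘ assoc⁻¹`, so that `d = m₁ ⊗ id + B ∘ (id ⊗ δ¹)`.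
Associativity of `ρ` turns `B ∘ (id ⊗ δ¹) ∘ B` into `B ∘ (id ⊗ (μ ⊗ id) ∘ (id ⊗ δ¹))`, and the
Leibniz rule for `m₁` turns `(m₁ ⊗ id) ∘ B` into `B ∘ (m₁ ⊗ id) + B ∘ (id ⊗ δ ⊗ id)`.
Expanding `d ∘ d` on `x ⊗ y`, the term `m₁ m₁ x ⊗ y` vanishes, the term `B (m₁ x ⊗ δ¹ y)` occurs
twice and cancels in characteristic `2`, and what remains is `B (x ⊗ ·)` applied to the type `D`
structure equation at `y`.
-/

section BoxTensor

variable {R A M χ : Type*} [CommSemiring R] [Semiring A] [Algebra R A]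
  [AddCommMonoid M] [Module R M] [AddCommMonoid χ] [Module R χ]

variable (χ) in
/-- For `ρ = mul' R A` this is the left `A`-action on `A ⊗ χ`. -/
def actTensor (ρ : M ⊗[R] A →ₗ[R] M) : M ⊗[R] (A ⊗[R] χ) →ₗ[R] M ⊗[R] χ :=
  rTensor χ ρ ∘ₗ (TensorProduct.assoc R M A χ).symm.toLinearMap

@[simp]
theorem actTensor_tmul_tmul (ρ : M ⊗[R] A →ₗ[R] M) (x : M) (a : A) (z : χ) :
    actTensor χ ρ (x ⊗ₜ (a ⊗ₜ z)) = ρ (x ⊗ₜ a) ⊗ₜ z := by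
  simp [actTensor]

theorem actTensor_act_tmul {ρ : M ⊗[R] A →ₗ[R] M}
    (hρ : ∀ (x : M) (a b : A), ρ (ρ (x ⊗ₜ a) ⊗ₜ b) = ρ (x ⊗ₜ (a * b)))
    (x : M) (a : A) (s : A ⊗[R] χ) :
    actTensor χ ρ (ρ (x ⊗ₜ a) ⊗ₜ s) = actTensor χ ρ (x ⊗ₜ actTensor χ (mul' R A) (a ⊗ₜ s)) := by
  induction s using TensorProduct.induction_on with
  | zero => simp
  | tmul b z => simp [hρ]
  | add s t hs ht => simp only [tmul_add, map_add, hs, ht]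

theorem actTensor_lTensor_actTensor {ρ : M ⊗[R] A →ₗ[R] M}
    (hρ : ∀ (x : M) (a b : A), ρ (ρ (x ⊗ₜ a) ⊗ₜ b) = ρ (x ⊗ₜ (a * b)))
    (f : χ →ₗ[R] A ⊗[R] χ) (x : M) (t : A ⊗[R] χ) :
    actTensor χ ρ (lTensor M f (actTensor χ ρ (x ⊗ₜ t)))
      = actTensor χ ρ (x ⊗ₜ actTensor χ (mul' R A) (lTensor A f t)) := by
  induction t using TensorProduct.induction_on with
  | zero => simp
  | tmul a z => simp [actTensor_act_tmul hρ]
  | add s t hs ht => simp only [tmul_add, map_add, hs, ht]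

theorem rTensor_actTensor {ρ : M ⊗[R] A →ₗ[R] M} {m₁ : M →ₗ[R] M} {δ : A →ₗ[R] A}
    (hm₁ : ∀ (x : M) (a : A), m₁ (ρ (x ⊗ₜ a)) = ρ (m₁ x ⊗ₜ a) + ρ (x ⊗ₜ δ a))
    (x : M) (t : A ⊗[R] χ) :
    rTensor χ m₁ (actTensor χ ρ (x ⊗ₜ t))
      = actTensor χ ρ (m₁ x ⊗ₜ t) + actTensor χ ρ (x ⊗ₜ rTensor χ δ t) := by
  induction t using TensorProduct.induction_on with
  | zero => simp
  | tmul a z => simp [hm₁, add_tmul]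
  | add s t hs ht =>
    simp only [tmul_add, map_add, hs, ht]
    abel

def boxDifferential (m₁ : M →ₗ[R] M) (ρ : M ⊗[R] A →ₗ[R] M) (δ₁ : χ →ₗ[R] A ⊗[R] χ) :
    M ⊗[R] χ →ₗ[R] M ⊗[R] χ :=
  rTensor χ m₁ + actTensor χ ρ ∘ₗ lTensor M δ₁

variable {m₁ : M →ₗ[R] M} {ρ : M ⊗[R] A →ₗ[R] M} {δ₁ : χ →ₗ[R] A ⊗[R] χ}

theorem boxDifferential_tmul (x : M) (y : χ) :
    boxDifferential m₁ ρ δ₁ (x ⊗ₜ y) = m₁ x ⊗ₜ y + actTensor χ ρ (x ⊗ₜ δ₁ y) := rfl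

theorem boxDifferential_actTensor {δ : A →ₗ[R] A}
    (hρ : ∀ (x : M) (a b : A), ρ (ρ (x ⊗ₜ a) ⊗ₜ b) = ρ (x ⊗ₜ (a * b)))
    (hm₁ : ∀ (x : M) (a : A), m₁ (ρ (x ⊗ₜ a)) = ρ (m₁ x ⊗ₜ a) + ρ (x ⊗ₜ δ a))
    (x : M) (t : A ⊗[R] χ) :
    boxDifferential m₁ ρ δ₁ (actTensor χ ρ (x ⊗ₜ t))
      = actTensor χ ρ (m₁ x ⊗ₜ t)
        + actTensor χ ρ (x ⊗ₜ (rTensor χ δ t + actTensor χ (mul' R A) (lTensor A δ₁ t))) := by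
  simp only [boxDifferential, LinearMap.add_apply, comp_apply, rTensor_actTensor hm₁,
    actTensor_lTensor_actTensor hρ, tmul_add, map_add, add_assoc]

theorem boxDifferential_comp_self [CharP R 2] {δ : A →ₗ[R] A}
    (hρ : ∀ (x : M) (a b : A), ρ (ρ (x ⊗ₜ a) ⊗ₜ b) = ρ (x ⊗ₜ (a * b)))
    (hm₁m₁ : ∀ x : M, m₁ (m₁ x) = 0)
    (hm₁ : ∀ (x : M) (a : A), m₁ (ρ (x ⊗ₜ a)) = ρ (m₁ x ⊗ₜ a) + ρ (x ⊗ₜ δ a))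
    (hD : actTensor χ (mul' R A) ∘ₗ lTensor A δ₁ ∘ₗ δ₁ + rTensor χ δ ∘ₗ δ₁ = 0) :
    boxDifferential m₁ ρ δ₁ ∘ₗ boxDifferential m₁ ρ δ₁ = 0 := by
  refine TensorProduct.ext' fun x y => ?_
  have hDy : rTensor χ δ (δ₁ y) + actTensor χ (mul' R A) (lTensor A δ₁ (δ₁ y)) = 0 := by
    simpa [add_comm] using LinearMap.congr_fun hD y
  have hcancel : ∀ u : M ⊗[R] χ, u + u = 0 := fun u => by
    rw [← two_smul R u, CharTwo.two_eq_zero, zero_smul]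
  rw [comp_apply, boxDifferential_tmul, map_add, boxDifferential_tmul, hm₁m₁, zero_tmul,
    zero_add, boxDifferential_actTensor hρ hm₁, hDy, tmul_zero, map_zero, add_zero, hcancel,
    LinearMap.zero_apply]

end BoxTensor

theorem statement9_general
    (A : Type*) [Ring A] [Algebra (ZMod 2) A]
    (δ : A →ₗ[ZMod 2] A)
    (M : Type*) [AddCommGroup M] [Module (ZMod 2) M]
    -- the right action `ρ : M ⊗ A → M`:
    (ρ : M ⊗[ZMod 2] A →ₗ[ZMod 2] M)
    (hρ_assoc : ∀ (x : M) (a b : A),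
      ρ (ρ (x ⊗ₜ[ZMod 2] a) ⊗ₜ[ZMod 2] b) = ρ (x ⊗ₜ[ZMod 2] (a * b)))
    -- the differential `m_1` on `M`, squaring to zero and satisfying the Leibniz rule:
    (m₁ : M →ₗ[ZMod 2] M)
    (hm₁m₁ : ∀ x : M, m₁ (m₁ x) = 0)
    (hm₁Leibniz : ∀ (x : M) (a : A),
      m₁ (ρ (x ⊗ₜ[ZMod 2] a)) = ρ (m₁ x ⊗ₜ[ZMod 2] a) + ρ (x ⊗ₜ[ZMod 2] δ a))
    -- the type `D` structure `(χ, δ¹)`: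
    (χ : Type*) [AddCommGroup χ] [Module (ZMod 2) χ]
    (δ₁ : χ →ₗ[ZMod 2] A ⊗[ZMod 2] χ)
    (hD : (LinearMap.rTensor χ (LinearMap.mul' (ZMod 2) A)) ∘ₗ
            (TensorProduct.assoc (ZMod 2) A A χ).symm.toLinearMap ∘ₗ
            (LinearMap.lTensor A δ₁) ∘ₗ δ₁
          + (LinearMap.rTensor χ δ) ∘ₗ δ₁ = 0)
    -- the differential `d` on `M ⊗ χ`:
    (d : M ⊗[ZMod 2] χ →ₗ[ZMod 2] M ⊗[ZMod 2] χ)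
    (hd : ∀ (x : M) (y : χ),
      d (x ⊗ₜ[ZMod 2] y)
        = m₁ x ⊗ₜ[ZMod 2] y
          + (LinearMap.rTensor χ ρ)
              ((TensorProduct.assoc (ZMod 2) M A χ).symm (x ⊗ₜ[ZMod 2] δ₁ y))) :
    d ∘ₗ d = 0 := by
  obtain rfl : d = boxDifferential m₁ ρ δ₁ := TensorProduct.ext' hd
  exact boxDifferential_comp_self hρ_assoc hm₁m₁ hm₁Leibniz hD

/-- Let `A` be a differential graded algebra over `F_2` with differential
`δ` and multiplication `μ`, let `M` be a right differential graded module over `A` with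
differential `m_1` and right action `ρ : M ⊗ A → M`, and let `(χ, δ¹)` be a type `D`
structure over `A`, i.e. `δ₁ : χ → A ⊗ χ` satisfies
`(μ ⊗ id_χ) ∘ (id_A ⊗ δ¹) ∘ δ¹ + (δ ⊗ id_χ) ∘ δ¹ = 0`
(with the implicit associator `A ⊗ (A ⊗ χ) ≅ (A ⊗ A) ⊗ χ` made explicit).
Then the `F_2`-linear map `d : M ⊗ χ → M ⊗ χ` defined by
`d(x ⊗ y) = m_1(x) ⊗ y + (ρ ⊗ id_χ)(x ⊗ δ¹(y))`
satisfies `d ∘ d = 0`; that is, the box tensor product `M ⊠ χ` is a chain complex. -/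
theorem statement9
    (A : Type*) [Ring A] [Algebra (ZMod 2) A]
    (δ : A →ₗ[ZMod 2] A)
    (hδδ : ∀ a : A, δ (δ a) = 0)
    (hLeibniz : ∀ a b : A, δ (a * b) = δ a * b + a * δ b)
    (M : Type*) [AddCommGroup M] [Module (ZMod 2) M]
    -- the right action `ρ : M ⊗ A → M`:
    (ρ : M ⊗[ZMod 2] A →ₗ[ZMod 2] M)
    (hρ_assoc : ∀ (x : M) (a b : A),
      ρ (ρ (x ⊗ₜ[ZMod 2] a) ⊗ₜ[ZMod 2] b) = ρ (x ⊗ₜ[ZMod 2] (a * b)))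
    (hρ_one : ∀ x : M, ρ (x ⊗ₜ[ZMod 2] (1 : A)) = x)
    -- the differential `m_1` on `M`, squaring to zero and satisfying the Leibniz rule:
    (m₁ : M →ₗ[ZMod 2] M)
    (hm₁m₁ : ∀ x : M, m₁ (m₁ x) = 0)
    (hm₁Leibniz : ∀ (x : M) (a : A),
      m₁ (ρ (x ⊗ₜ[ZMod 2] a)) = ρ (m₁ x ⊗ₜ[ZMod 2] a) + ρ (x ⊗ₜ[ZMod 2] δ a))
    -- the type `D` structure `(χ, δ¹)`:
    (χ : Type*) [AddCommGroup χ] [Module (ZMod 2) χ]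
    (δ₁ : χ →ₗ[ZMod 2] A ⊗[ZMod 2] χ)
    (hD : (LinearMap.rTensor χ (LinearMap.mul' (ZMod 2) A)) ∘ₗ
            (TensorProduct.assoc (ZMod 2) A A χ).symm.toLinearMap ∘ₗ
            (LinearMap.lTensor A δ₁) ∘ₗ δ₁
          + (LinearMap.rTensor χ δ) ∘ₗ δ₁ = 0)
    -- the differential `d` on `M ⊗ χ`:
    (d : M ⊗[ZMod 2] χ →ₗ[ZMod 2] M ⊗[ZMod 2] χ)
    (hd : ∀ (x : M) (y : χ),
      d (x ⊗ₜ[ZMod 2] y)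
        = m₁ x ⊗ₜ[ZMod 2] y
          + (LinearMap.rTensor χ ρ)
              ((TensorProduct.assoc (ZMod 2) M A χ).symm (x ⊗ₜ[ZMod 2] δ₁ y))) :
    d ∘ₗ d = 0 :=
  statement9_general A δ M ρ hρ_assoc m₁ hm₁m₁ hm₁Leibniz χ δ₁ hD d hd
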